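/- arXiv:math/0507582 — 3 statements merged into one kernel-verified Lean document; each statement's English description precedes it below -/
import Mathlib

section
/- Place N balls independently and uniformly at random into M boxes (M ≥ 3). Then the probability that every box contains at least one ball is at most exp(−(M/2)·exp(−4N/M)). -/
/-!
Let `p m` be the proportion of surjections `Fin N → Fin m`. The events "box `i` is hit" are
negatively correlated, so `p (m + 1) ≤ p m · (1 - (m / (m + 1)) ^ N)`, the last factor being
the chance that the new box is hit; an explicit injection proves this. Iterating from
`m = ⌊M/2⌋` up to `M` gives `p M ≤ (1 - (m / (m + 1)) ^ N) ^ ⌈M/2⌉`. For `M ≥ 3`,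
`(m / (m + 1)) ^ N ≥ (1 - 2 / M) ^ N ≥ exp (-4N/M)`, and `1 - x ≤ exp (-x)` finishes.
-/

open Finset Function

section Counting

variable {α β : Type*} [Fintype α] [DecidableEq α] [Fintype β] [DecidableEq β]

theorem card_surjective_congr {γ : Type*} [Fintype γ] [DecidableEq γ] (e : β ≃ γ) :
    #{f : α → β | Surjective f} = #{f : α → γ | Surjective f} :=
  card_equiv ((Equiv.refl α).arrowCongr e) fun f => by
    simp only [mem_filter, mem_univ, true_and]
    exact (e.comp_surjective f).symm

theorem card_exists_eq_none_add_pow :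
    #{k : α → Option β | ∃ a, k a = none} + Fintype.card β ^ Fintype.card α =
      (Fintype.card β + 1) ^ Fintype.card α := by
  have hmiss : ({k : α → Option β | ¬∃ a, k a = none} : Finset _) =
      Fintype.piFinset fun _ => (univ : Finset (Option β)).erase none := by
    ext k
    simp
  have hsplit :=
    card_filter_add_card_filter_not (s := univ) fun k : α → Option β => ∃ a, k a = none
  rw [hmiss] at hsplit
  simpa using hsplit

theorem card_surjective_option_mul_le :
    #{f : α → Option β | Surjective f} * Fintype.card β ^ Fintype.card α ≤
      #{g : α → β | Surjective g} * #{k : α → Option β | ∃ a, k a = none} := by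
  rw [← Fintype.card_fun, ← card_univ, ← card_product, ← card_product]
  -- `(f, h) ↦ (g, k)`: `g` sends the balls of the extra box `none` where `h` says, `k` keeps them
  -- in `none` and sends every other ball where `h` says; `k` remembers which balls were in `none`.
  refine card_le_card_of_injOn
    (fun p => (fun a => (p.1 a).getD (p.2 a), fun a => (p.1 a).map fun _ => p.2 a)) ?_ ?_
  · rintro ⟨f, h⟩ hf
    simp only [mem_coe, mem_product, mem_filter, mem_univ, true_and, and_true] at hf ⊢
    constructor
    · intro b
      obtain ⟨a, ha⟩ := hf (some b)
      exact ⟨a, by simp [ha]⟩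
    · obtain ⟨a, ha⟩ := hf none
      exact ⟨a, by simp [ha]⟩
  · rintro ⟨f, h⟩ - ⟨f', h'⟩ - himage
    simp only [Prod.mk.injEq, funext_iff] at himage
    have hpoint : ∀ a, f a = f' a ∧ h a = h' a := fun a => by
      have hg := himage.1 a
      have hk := himage.2 a
      revert hg hk
      cases f a <;> cases f' a <;> simp_all
    simp only [Prod.mk.injEq, funext_iff]
    exact ⟨fun a => (hpoint a).1, fun a => (hpoint a).2⟩

end Counting

noncomputable def surjProb (N m : ℕ) : ℝ :=
  #{f : Fin N → Fin m | Surjective f} / (m : ℝ) ^ N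

theorem surjProb_nonneg (N m : ℕ) : 0 ≤ surjProb N m := by
  unfold surjProb
  positivity

theorem surjProb_le_one (N m : ℕ) : surjProb N m ≤ 1 := by
  refine div_le_one_of_le₀ ?_ (by positivity)
  exact_mod_cast (card_filter_le _ _).trans_eq (by simp)

theorem surjProb_succ_le (N : ℕ) {m : ℕ} (hm : 0 < m) :
    surjProb N (m + 1) ≤ surjProb N m * (1 - ((m : ℝ) / (m + 1)) ^ N) := by
  have hcount := card_surjective_option_mul_le (α := Fin N) (β := Fin m)
  have htotal := card_exists_eq_none_add_pow (α := Fin N) (β := Fin m)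
  rw [card_surjective_congr (finSuccEquiv m).symm] at hcount
  simp only [Fintype.card_fin] at hcount htotal
  have hcount' := (Nat.cast_le (α := ℝ)).2 hcount
  have htotal' := congrArg (Nat.cast : ℕ → ℝ) htotal
  push_cast at hcount' htotal'
  rw [eq_sub_of_add_eq htotal'] at hcount'
  unfold surjProb
  rw [div_pow, one_sub_div (by positivity), div_mul_div_comm, div_le_div_iff₀ (by positivity)
    (by positivity)]
  push_cast
  linear_combination ((m : ℝ) + 1) ^ N * hcount'

theorem one_sub_div_add_one_pow_nonneg {x : ℝ} (hx : 0 ≤ x) (N : ℕ) :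
    0 ≤ 1 - (x / (x + 1)) ^ N :=
  sub_nonneg.2 (pow_le_one₀ (by positivity) (div_le_one_of_le₀ (by linarith) (by positivity)))

theorem surjProb_add_le (N : ℕ) {m : ℕ} (hm : 0 < m) (K : ℕ) :
    surjProb N (m + K) ≤ (1 - ((m : ℝ) / (m + 1)) ^ N) ^ K := by
  induction K with
  | zero => simpa using surjProb_le_one N m
  | succ K ih =>
    have hfrac : (m : ℝ) / (m + 1) ≤ ((m + K : ℕ) : ℝ) / ((m + K : ℕ) + 1) := by
      rw [div_le_div_iff₀ (by positivity) (by positivity)]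
      push_cast
      nlinarith [(Nat.cast_nonneg K : (0 : ℝ) ≤ K)]
    calc surjProb N (m + (K + 1))
        ≤ surjProb N (m + K) * (1 - (((m + K : ℕ) : ℝ) / ((m + K : ℕ) + 1)) ^ N) :=
          surjProb_succ_le N (m := m + K) (by omega)
      _ ≤ (1 - ((m : ℝ) / (m + 1)) ^ N) ^ K * (1 - ((m : ℝ) / (m + 1)) ^ N) := by
          gcongr
          · exact one_sub_div_add_one_pow_nonneg (Nat.cast_nonneg _) N
          · exact (surjProb_nonneg N _).trans ih
      _ = (1 - ((m : ℝ) / (m + 1)) ^ N) ^ (K + 1) := (pow_succ _ _).symm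

theorem Real.exp_neg_le_one_sub_half {u : ℝ} (hu : 0 ≤ u) (hu2 : u ^ 2 ≤ 2) :
    Real.exp (-u) ≤ 1 - u / 2 := by
  have hquad := Real.quadratic_le_exp_of_nonneg hu
  rw [Real.exp_neg, inv_le_iff_one_le_mul₀ (Real.exp_pos u)]
  -- `(1 - u/2)(1 + u + u^2/2) = 1 + u/2 - u^3/4 ≥ 1` exactly when `u^2 ≤ 2`
  nlinarith [mul_le_mul_of_nonneg_left hu2 hu]

theorem exp_neg_four_mul_div_le_pow {M m : ℕ} (hM : 3 ≤ M) (hMm : M ≤ 2 * (m + 1)) (N : ℕ) :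
    Real.exp (-4 * N / M) ≤ ((m : ℝ) / (m + 1)) ^ N := by
  have hM' : (3 : ℝ) ≤ M := by exact_mod_cast hM
  have hMm' : (M : ℝ) ≤ 2 * (m + 1) := by exact_mod_cast hMm
  have hbase : Real.exp (-(4 / M)) ≤ (m : ℝ) / (m + 1) := by
    refine (Real.exp_neg_le_one_sub_half (by positivity) ?_).trans ?_
    · rw [div_pow, div_le_iff₀ (by positivity)]
      nlinarith
    · rw [le_div_iff₀ (by positivity)]
      field_simp
      linarith
  calc Real.exp (-4 * N / M) = Real.exp (-(4 / M)) ^ N := by rw [← Real.exp_nat_mul]; ring_nf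
    _ ≤ _ := by gcongr

/-- Place `N` balls independently and uniformly at random into `M` boxes
(`M ≥ 3`). The probability that every box contains at least one ball (i.e.
the proportion of surjective maps `Fin N → Fin M`) is at most
`exp(-(M/2) exp(-4N/M))`. -/
theorem balls_in_boxes_surjective_prob
    (N M : ℕ) (hM : 3 ≤ M) :
    ((Finset.univ.filter fun f : Fin N → Fin M => Function.Surjective f).card : ℝ) /
        (M : ℝ) ^ N ≤
      Real.exp (-((M : ℝ) / 2) * Real.exp (-4 * (N : ℝ) / M)) := by
  obtain ⟨m, K, hm, hMm, hMK, hsplit⟩ :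
      ∃ m K, 0 < m ∧ M ≤ 2 * (m + 1) ∧ M ≤ 2 * K ∧ M = m + K :=
    ⟨M / 2, M - M / 2, by omega, by omega, by omega, by omega⟩
  set E := Real.exp (-4 * (N : ℝ) / M)
  have hK : (M : ℝ) / 2 ≤ K := by
    have : (M : ℝ) ≤ 2 * K := by exact_mod_cast hMK
    linarith
  calc _ = surjProb N (m + K) := by rw [← hsplit]; rfl
    _ ≤ (1 - ((m : ℝ) / (m + 1)) ^ N) ^ K := surjProb_add_le N hm K
    _ ≤ Real.exp (-E) ^ K := by
      gcongr
      · exact one_sub_div_add_one_pow_nonneg (Nat.cast_nonneg m) N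
      · linarith [Real.one_sub_le_exp_neg E, exp_neg_four_mul_div_le_pow hM hMm N]
    _ = Real.exp (-(K * E)) := by rw [← Real.exp_nat_mul]; ring_nf
    _ ≤ Real.exp (-((M : ℝ) / 2) * E) := by
      rw [neg_mul, Real.exp_le_exp, neg_le_neg_iff]
      exact mul_le_mul_of_nonneg_right hK (Real.exp_nonneg _)
end

section
/- For N i.i.d. uniform balls in M boxes with M ≥ 3, the surjectivity probability satisfies the recursion p_{N,M} ≤ p_{N,M−1}·q_{N,M}, where p_{N,M} is the probability all M boxes are occupied and q_{N,M} = 1 − (1 − 1/M)^N is the probability that box 1 is occupied. -/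
/-!
Model box 1 as `none : Option β`. A surjection `f : α → Option β` together with an arbitrary
`h : α → β` determines, injectively, the surjection `i ↦ (f i).getD (h i)` onto the remaining
boxes (the balls of box 1 are moved according to `h`) and the map `i ↦ (f i).map (fun _ ↦ h i)`,
which still hits `none` and remembers both which balls lay in box 1 and `h` off box 1. Hence
`#Surj(α, Option β) · |β|^|α| ≤ #Surj(α, β) · ((|β| + 1)^|α| - |β|^|α|)`, which is the
recursion after dividing by `(|β| + 1)^|α| · |β|^|α|`.
-/

open Function

theorem Option.eq_and_eq_of_getD_eq_of_map_const_eq {β : Type*} {x y : Option β} {a b : β}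
    (hget : x.getD a = y.getD b) (hmap : x.map (fun _ => a) = y.map (fun _ => b)) :
    x = y ∧ a = b := by
  cases x <;> cases y <;> simp_all

section BallsInBoxes

variable {α β : Type*} [Fintype α] [DecidableEq α] [Fintype β]

theorem card_fun_option_exists_eq_none_add_pow :
    Fintype.card {u : α → Option β // ∃ i, u i = none} + Fintype.card β ^ Fintype.card α =
      (Fintype.card β + 1) ^ Fintype.card α := by
  have hmiss : Fintype.card {u : α → Option β // ¬∃ i, u i = none} =
      Fintype.card β ^ Fintype.card α := by
    rw [Fintype.card_congr ((Equiv.subtypeEquivRight fun u => by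
        simp [Option.isSome_iff_ne_none]).trans (Equiv.subtypePiEquivPi.trans
        (Equiv.arrowCongr (Equiv.refl α) (Equiv.optionIsSomeEquiv β))))]
    simp
  rw [← hmiss, ← Fintype.card_sum, Fintype.card_congr (Equiv.sumCompl _), Fintype.card_fun,
    Fintype.card_option]

variable [DecidableEq β]

theorem card_surjective_option_mul_pow_le :
    Fintype.card {f : α → Option β // Surjective f} * Fintype.card β ^ Fintype.card α ≤
      Fintype.card {g : α → β // Surjective g} *
        Fintype.card {u : α → Option β // ∃ i, u i = none} := by
  rw [← Fintype.card_fun, ← Fintype.card_prod, ← Fintype.card_prod]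
  refine Fintype.card_le_of_injective
    (fun p => (⟨fun i => (p.1.1 i).getD (p.2 i), fun b => ?_⟩,
      ⟨fun i => (p.1.1 i).map fun _ => p.2 i, ?_⟩)) ?_
  · obtain ⟨i, hi⟩ := p.1.2 (some b)
    exact ⟨i, by simp [hi]⟩
  · obtain ⟨i, hi⟩ := p.1.2 none
    exact ⟨i, by simp [hi]⟩
  · rintro ⟨⟨f₁, _⟩, h₁⟩ ⟨⟨f₂, _⟩, h₂⟩ hfg
    obtain ⟨hget, hmap⟩ := Prod.mk.inj hfg
    have hpt i := Option.eq_and_eq_of_getD_eq_of_map_const_eq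
      (congrFun (congrArg Subtype.val hget) i) (congrFun (congrArg Subtype.val hmap) i)
    exact Prod.ext (Subtype.ext (funext fun i => (hpt i).1)) (funext fun i => (hpt i).2)

theorem card_surjective_option_div_pow_le [Nonempty β] :
    (Fintype.card {f : α → Option β // Surjective f} : ℝ) /
        (Fintype.card β + 1) ^ Fintype.card α ≤
      (Fintype.card {g : α → β // Surjective g} : ℝ) / Fintype.card β ^ Fintype.card α *
        (1 - (1 - 1 / (Fintype.card β + 1 : ℝ)) ^ Fintype.card α) := by
  have hhit : (Fintype.card {u : α → Option β // ∃ i, u i = none} : ℝ) +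
      Fintype.card β ^ Fintype.card α = (Fintype.card β + 1) ^ Fintype.card α := by
    exact_mod_cast card_fun_option_exists_eq_none_add_pow
  have key : (Fintype.card {f : α → Option β // Surjective f} : ℝ) *
      Fintype.card β ^ Fintype.card α ≤
        Fintype.card {g : α → β // Surjective g} *
          Fintype.card {u : α → Option β // ∃ i, u i = none} := by
    exact_mod_cast card_surjective_option_mul_pow_le
  set m : ℝ := (Fintype.card β : ℝ)
  have hm : 0 < m := by simp [m, Fintype.card_pos]
  have hq : 1 - (1 - 1 / (m + 1)) ^ Fintype.card α =
      Fintype.card {u : α → Option β // ∃ i, u i = none} / (m + 1) ^ Fintype.card α := by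
    rw [one_sub_div (by positivity), add_sub_cancel_right, div_pow, one_sub_div (by positivity),
      ← hhit, add_sub_cancel_right]
  rw [hq, div_mul_div_comm, div_le_div_iff₀ (by positivity) (by positivity), ← mul_assoc]
  exact mul_le_mul_of_nonneg_right key (by positivity)

end BallsInBoxes

/-- For `N` i.i.d. uniform balls in `M ≥ 3` boxes, the surjectivity probability
satisfies `p_{N,M} ≤ p_{N,M-1} · q_{N,M}` where
`q_{N,M} = 1 - (1 - 1/M)^N` is the probability that box 1 is occupied. -/
theorem balls_in_boxes_recursion
    (N M : ℕ) (hM : 3 ≤ M) :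
    ((Finset.univ.filter fun f : Fin N → Fin M => Function.Surjective f).card : ℝ) /
        (M : ℝ) ^ N ≤
      (((Finset.univ.filter fun f : Fin N → Fin (M - 1) =>
          Function.Surjective f).card : ℝ) / ((M - 1 : ℕ) : ℝ) ^ N) *
        (1 - (1 - 1 / (M : ℝ)) ^ N) := by
  obtain ⟨m, rfl⟩ : ∃ m, M = m + 1 := ⟨M - 1, by omega⟩
  have : Nonempty (Fin m) := ⟨⟨0, by omega⟩⟩
  have hbox : Fintype.card {f : Fin N → Fin (m + 1) // Surjective f} =
      Fintype.card {f : Fin N → Option (Fin m) // Surjective f} :=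
    Fintype.card_congr <| (Equiv.refl (Fin N)).arrowCongr (finSuccEquiv m) |>.subtypeEquiv fun f =>
      (finSuccEquiv m).comp_surjective f |>.symm
  simpa [← Fintype.card_subtype, hbox] using
    card_surjective_option_div_pow_le (α := Fin N) (β := Fin m)
end

section
/- Suppose nonnegative reals satisfy ν_p ≤ exp(−Kn(p−1) − Kp(p−1)/2 + p)·p^{−p}·V^p, where V ≤ C·n³·e^{Kn}. Then for p = C_O·√n with C_O > 2 and n large enough, ν_p ≤ exp(−K(C_O²/4 − 1)n). -/
private lemma key_aux (a B t : ℝ) (hB : 0 < B) (ht : 1 ≤ t)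
    (h : 48 + 4 * B ≤ a * t) : 12 * t + B ≤ a * t ^ 2 / 4 := by nlinarith

private lemma final_aux (K CO s n Lc Ln Lp : ℝ) (hn : s ^ 2 = n)
    (hprod : CO * s * (K / 2 + 1 + Lc + 3 * Ln - Lp) ≤ CO * s * (K * CO * s / 4)) :
    -K * n * (CO * s - 1) - K * (CO * s) * (CO * s - 1) / 2 + CO * s +
      Lp * (-(CO * s)) + (Lc + 3 * Ln + K * n) * (CO * s) ≤
      -K * (CO ^ 2 / 4 - 1) * n := by
  subst hn; nlinarith [hprod]

/-- If `ν ≤ exp(-Kn(p-1) - Kp(p-1)/2 + p) p^{-p} V^p` with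
`V ≤ C n³ e^{Kn}`, then for `p = C_O √n` with `C_O > 2` and `n` large enough,
`ν ≤ exp(-K (C_O²/4 - 1) n)`. -/
theorem nu_outer_estimate
    (K C CO : ℝ) (hK : 0 < K) (hC : 0 < C) (hCO : 2 < CO) :
    ∃ n₀ : ℕ, ∀ n : ℕ, n₀ ≤ n → ∀ ν Vol : ℝ, 0 ≤ Vol →
      Vol ≤ C * (n : ℝ) ^ 3 * Real.exp (K * n) →
      ∀ p : ℝ, p = CO * Real.sqrt n →
      ν ≤ Real.exp (-K * n * (p - 1) - K * p * (p - 1) / 2 + p) *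
            p ^ (-p) * Vol ^ p →
      ν ≤ Real.exp (-K * (CO ^ 2 / 4 - 1) * n) := by
  set B : ℝ := K / 2 + 1 + |Real.log C| with hBdef
  have hB : (0:ℝ) < B := by positivity
  have hCO0 : (0:ℝ) < CO := by linarith
  have hKCO : (0:ℝ) < K * CO := mul_pos hK hCO0
  set M : ℝ := (48 + 4 * B) / (K * CO) with hMdef
  set N : ℝ := max M 1 with hNdef
  have hN1 : (1:ℝ) ≤ N := le_max_right _ _
  have hN0 : (0:ℝ) < N := lt_of_lt_of_le one_pos hN1
  refine ⟨⌈N ^ 4⌉₊, fun n hn ν Vol hVol0 hVolle p hp hν => ?_⟩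
  have hnN : N ^ 4 ≤ (n : ℝ) := le_trans (Nat.le_ceil _) (by exact_mod_cast hn)
  set s : ℝ := Real.sqrt n with hsdef
  set t : ℝ := Real.sqrt s with htdef
  have hs0 : 0 ≤ s := Real.sqrt_nonneg _
  have hts : t ^ 2 = s := Real.sq_sqrt hs0
  have hsn : s ^ 2 = (n : ℝ) := Real.sq_sqrt (Nat.cast_nonneg n)
  have htN : N ≤ t := by
    have h1 : Real.sqrt ((N ^ 2) ^ 2) ≤ s := by
      apply Real.sqrt_le_sqrt; nlinarith
    rw [Real.sqrt_sq (by positivity)] at h1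
    have h2 : Real.sqrt (N ^ 2) ≤ t := Real.sqrt_le_sqrt h1
    rwa [Real.sqrt_sq hN0.le] at h2
  have ht1 : (1:ℝ) ≤ t := le_trans hN1 htN
  have hs1 : (1:ℝ) ≤ s := by nlinarith
  have hp1 : (1:ℝ) ≤ p := by rw [hp]; nlinarith
  have hp0 : (0:ℝ) < p := lt_of_lt_of_le one_pos hp1
  have hn1 : (1:ℝ) ≤ (n:ℝ) := by nlinarith
  have hn0 : (0:ℝ) < (n:ℝ) := lt_of_lt_of_le one_pos hn1
  set X : ℝ := C * (n : ℝ) ^ 3 * Real.exp (K * n) with hXdef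
  have hX0 : (0:ℝ) < X := by positivity
  -- log facts
  have hlogn : Real.log n = 4 * Real.log t := by
    have hn4 : (n:ℝ) = t ^ 4 := by rw [← hsn, ← hts]; ring
    rw [hn4, Real.log_pow]; push_cast; ring
  have hlogt : Real.log t ≤ t - 1 := Real.log_le_sub_one_of_pos (by linarith)
  have hlogp : 0 ≤ Real.log p := Real.log_nonneg hp1
  have hlogX : Real.log X = Real.log C + 3 * Real.log n + K * n := by
    rw [hXdef, Real.log_mul (by positivity) (Real.exp_ne_zero _),
      Real.log_mul (ne_of_gt hC) (by positivity), Real.log_exp, Real.log_pow]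
    push_cast; ring
  -- key size estimate
  have hKt : 48 + 4 * B ≤ K * CO * t := by
    have hM : M ≤ t := le_trans (le_max_left _ _) htN
    have : M * (K * CO) ≤ t * (K * CO) := mul_le_mul_of_nonneg_right hM hKCO.le
    rw [hMdef, div_mul_cancel₀ _ (ne_of_gt hKCO)] at this
    linarith
  have hkey : 12 * t + B ≤ K * CO * s / 4 := by
    rw [← hts]
    exact key_aux (K * CO) B t hB ht1 hKt
  -- main chain
  have hVp : Vol ^ p ≤ X ^ p := Real.rpow_le_rpow hVol0 hVolle hp0.le
  have hν2 : ν ≤ Real.exp (-K * n * (p - 1) - K * p * (p - 1) / 2 + p) *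
      p ^ (-p) * X ^ p := by
    refine le_trans hν (mul_le_mul_of_nonneg_left hVp ?_)
    positivity
  rw [Real.rpow_def_of_pos hp0, Real.rpow_def_of_pos hX0, ← Real.exp_add,
    ← Real.exp_add] at hν2
  refine le_trans hν2 (Real.exp_le_exp.mpr ?_)
  rw [hlogX, hp]
  have hsum : K / 2 + 1 + Real.log C + 3 * Real.log n - Real.log p
      ≤ K * CO * s / 4 := by
    have hC' : Real.log C ≤ |Real.log C| := le_abs_self _
    have h3 : 3 * Real.log n ≤ 12 * t := by rw [hlogn]; linarith
    linarith
  have hprod : CO * s * (K / 2 + 1 + Real.log C + 3 * Real.log n - Real.log p)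
      ≤ CO * s * (K * CO * s / 4) :=
    mul_le_mul_of_nonneg_left hsum (by positivity)
  rw [hp] at hprod
  exact final_aux K CO s n _ _ _ hsn hprod
end
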